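/- Let σ be an involutive automorphism of the Lie algebra L satisfying σ(H) = −H, and let L^σ = {v ∈ L : σ(v) = v} be its fixed-point subalgebra. Then L = L^σ + g_0 + Z_L(X) (sum of vector subspaces of L). -/

import Mathlib

/-!
Since `σ H = -H`, the automorphism `σ` exchanges the eigenspaces `g j` and `g (-j)`. As `ad X` raises
the `ad H`-degree by `2` and there are no degrees above `2`, the positive part `g 1 ⊔ g 2` lies in
`Z_L(X)`. Writing `v = n + b + p` with `n` of negative, `b` of zero and `p` of positive degree,
`v = (n + σ n) + b + (p - σ n)` is the required decomposition.
-/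

open Module End LieAlgebra

theorem Module.End.eigenspace_eq_bot_of_biSup_eq_top {R M : Type*} [CommRing R] [IsDomain R]
    [AddCommGroup M] [Module R M] [IsTorsionFree R M] (f : End R M) {S : Set R}
    (hS : ⨆ μ ∈ S, f.eigenspace μ = ⊤) {ν : R} (hν : ν ∉ S) : f.eigenspace ν = ⊥ :=
  disjoint_top.mp (hS ▸ f.eigenspaces_iSupIndep.disjoint_biSup hν)

section AdEigenspace

variable {R L : Type*} [CommRing R] [LieRing L] [LieAlgebra R L] {H x y : L} {a b : R}

theorem LieAlgebra.mem_eigenspace_ad_iff : x ∈ (ad R L H).eigenspace a ↔ ⁅H, x⁆ = a • x :=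
  mem_eigenspace_iff

theorem LieAlgebra.lie_mem_eigenspace_ad (hx : x ∈ (ad R L H).eigenspace a)
    (hy : y ∈ (ad R L H).eigenspace b) : ⁅x, y⁆ ∈ (ad R L H).eigenspace (a + b) := by
  rw [mem_eigenspace_ad_iff] at hx hy ⊢
  rw [leibniz_lie, hx, hy, smul_lie, lie_smul, add_smul, add_comm]

theorem LieHom.map_eigenspace_ad_le_neg (σ : L →ₗ⁅R⁆ L) (hσH : σ H = -H) (a : R) :
    ((ad R L H).eigenspace a).map (σ : L →ₗ[R] L) ≤ (ad R L H).eigenspace (-a) := by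
  rintro _ ⟨x, hx, rfl⟩
  rw [SetLike.mem_coe, mem_eigenspace_ad_iff] at hx
  rw [mem_eigenspace_ad_iff, LieHom.coe_toLinearMap, ← neg_neg H, ← hσH, neg_lie, ← σ.map_lie,
    hx, map_smul, neg_smul]

end AdEigenspace

theorem stmt_15_general {L : Type*} [LieRing L] [LieAlgebra ℝ L]
    (X H : L)
    (hHX : ⁅H, X⁆ = (2 : ℝ) • X)
    (g : ℤ → Submodule ℝ L)
    (hg : ∀ j : ℤ, g j = Module.End.eigenspace (LieAlgebra.ad ℝ L H) (j : ℝ))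
    (hspan : g (-2) ⊔ g (-1) ⊔ g 0 ⊔ g 1 ⊔ g 2 = ⊤)
    (σ : L →ₗ⁅ℝ⁆ L) (hinv : ∀ v : L, σ (σ v) = v) (hσH : σ H = -H) :
    ∀ v : L, ∃ a b c : L,
      σ a = a ∧ b ∈ g 0 ∧ ⁅X, c⁆ = 0 ∧ v = a + b + c := by
  have hspan' : ⨆ μ ∈ ({-2, -1, 0, 1, 2} : Set ℝ), (ad ℝ L H).eigenspace μ = ⊤ := by
    simp only [iSup_insert, iSup_singleton, ← hspan, hg]
    push_cast
    ac_rfl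
  have hX : X ∈ (ad ℝ L H).eigenspace 2 := mem_eigenspace_ad_iff.mpr hHX
  have hcomm_of_bot (j : ℤ) (hj : (ad ℝ L H).eigenspace (2 + j) = ⊥) :
      g j ≤ LinearMap.ker (ad ℝ L X) := fun w hw =>
    (Submodule.mem_bot ℝ).mp (hj ▸ lie_mem_eigenspace_ad hX (hg j ▸ hw))
  have hpos : g 1 ⊔ g 2 ≤ LinearMap.ker (ad ℝ L X) :=
    sup_le (hcomm_of_bot 1 (eigenspace_eq_bot_of_biSup_eq_top _ hspan' (by norm_num)))
      (hcomm_of_bot 2 (eigenspace_eq_bot_of_biSup_eq_top _ hspan' (by norm_num)))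
  have hneg : (g (-2) ⊔ g (-1)).map (σ : L →ₗ[ℝ] L) ≤ g 1 ⊔ g 2 := by
    rw [Submodule.map_sup, sup_comm]
    refine sup_le_sup ?_ ?_ <;> simpa [hg] using σ.map_eigenspace_ad_le_neg hσH (-_)
  intro v
  have hv : v ∈ (g (-2) ⊔ g (-1)) ⊔ g 0 ⊔ (g 1 ⊔ g 2) := by
    rw [← sup_assoc, hspan]
    trivial
  obtain ⟨u, hu, p, hp, rfl⟩ := Submodule.mem_sup.mp hv
  obtain ⟨n, hn, b, hb, rfl⟩ := Submodule.mem_sup.mp hu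
  refine ⟨n + σ n, b, p - σ n, by rw [map_add, hinv, add_comm], hb, ?_, by abel⟩
  simpa using hpos (sub_mem hp (hneg ⟨n, hn, rfl⟩))

/-- If `σ` is an involutive automorphism of `L` with
`σ(H) = −H`, and `L^σ` its fixed-point subalgebra, then
`L = L^σ + g_0 + Z_L(X)` (sum of vector subspaces of `L`). -/
theorem stmt_15 {L : Type*} [LieRing L] [LieAlgebra ℝ L]
    [Module.Finite ℝ L] [LieAlgebra.IsSemisimple ℝ L]
    (X H Y : L)
    (hHX : ⁅H, X⁆ = (2 : ℝ) • X) (hHY : ⁅H, Y⁆ = (-2 : ℝ) • Y)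
    (hXY : ⁅X, Y⁆ = H)
    (g : ℤ → Submodule ℝ L)
    (hg : ∀ j : ℤ, g j = Module.End.eigenspace (LieAlgebra.ad ℝ L H) (j : ℝ))
    (hspan : g (-2) ⊔ g (-1) ⊔ g 0 ⊔ g 1 ⊔ g 2 = ⊤)
    (σ : L →ₗ⁅ℝ⁆ L) (hinv : ∀ v : L, σ (σ v) = v) (hσH : σ H = -H) :
    ∀ v : L, ∃ a b c : L,
      σ a = a ∧ b ∈ g 0 ∧ ⁅X, c⁆ = 0 ∧ v = a + b + c :=
  stmt_15_general X H hHX g hg hspan σ hinv hσH
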